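/- Let U be a non-singular orthogonal geometry over a field F of characteristic ≠ 2 and U_para = F·1 ⊕ U the paravectors in C(U). For any non-isotropic paravectors x₁, x₂ (q_para(x_i) ≠ 0) and any paravector y, one has (x₁·x̄₂) · y · ((x₁·x̄₂)')⁻¹ = r_{x₁}(r_{x₂}(y)) in C(U); that is, ρ_para(x₁·x̄₂) equals the composite reflection r_{x₁} ∘ r_{x₂} on U_para. -/
import Mathlib


open CliffordAlgebra

/-- The reflection of the paravector space `U_para ≅ F × U` in the hyperplane
orthogonal to the non-isotropic paravector `x`:
`r_x z = z - (2·S_para(z,x) / q_para(x)) • x`, where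
`S_para((z₁,z₂),(x₁,x₂)) = z₁x₁ + S z₂ x₂` and `q_para (x₁,x₂) = x₁² + S x₂ x₂`. -/
noncomputable def reflPara {F : Type*} [Field F] {U : Type*} [AddCommGroup U] [Module F U]
    (S : LinearMap.BilinForm F U) (x z : F × U) : F × U :=
  z - ((2 * (z.1 * x.1 + S z.2 x.2)) / (x.1 ^ 2 + S x.2 x.2)) • x

/-- For non-isotropic paravectors `x₁ = c₁ + u₁`, `x₂ = c₂ + u₂` and a paravector
`y = c₃ + u₃`, one has `ρ_para(x₁·x̄₂)(y) = (x₁·x̄₂) · y · ((x₁·x̄₂)')⁻¹ =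
r_{x₁}(r_{x₂}(y))` in `C(U)` (with `x̄ = involute (reverse x)`). -/
lemma sandwich' {F : Type*} [Field F] {U : Type*} [AddCommGroup U] [Module F U]
    (S : LinearMap.BilinForm F U) (hS : ∀ x y, S x y = S y x)
    (Q : QuadraticForm F U) (hQ : ∀ u, Q u = -(S u u)) (c d : F) (u w : U) :
    (algebraMap F (CliffordAlgebra Q) c + ι Q u) *
      (algebraMap F (CliffordAlgebra Q) d + ι Q w) *
      (algebraMap F (CliffordAlgebra Q) c + ι Q u) =
    algebraMap F (CliffordAlgebra Q) (c^2*d - 2*c*(S u w) - d * S u u)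
      + ι Q ((c^2 + S u u) • w + (2*c*d - 2*(S u w)) • u) := by
  have hsq : ι Q u * ι Q u = (-(S u u)) • (1 : CliffordAlgebra Q) := by
    rw [ι_sq_scalar, hQ, Algebra.algebraMap_eq_smul_one]
  have hp : QuadraticMap.polar Q u w = -(2 * S u w) := by
    simp only [QuadraticMap.polar, hQ, map_add, LinearMap.add_apply]
    rw [hS w u]; ring
  have hswap : ι Q w * ι Q u = (-(2 * S u w)) • (1 : CliffordAlgebra Q) - ι Q u * ι Q w := by
    rw [eq_sub_of_add_eq' (ι_mul_ι_add_swap u w), hp, Algebra.algebraMap_eq_smul_one]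
  have hsq2 : ∀ x : CliffordAlgebra Q, ι Q u * (ι Q u * x) = (-(S u u)) • x := by
    intro x; rw [← mul_assoc, hsq, smul_mul_assoc, one_mul]
  simp only [Algebra.algebraMap_eq_smul_one, map_add, map_smul, mul_add, add_mul,
    smul_mul_assoc, mul_smul_comm, one_mul, mul_one, mul_assoc, hswap, hsq, hsq2,
    mul_sub, sub_mul, smul_sub, smul_smul]
  module

lemma pconj_mul {F : Type*} [Field F] {U : Type*} [AddCommGroup U] [Module F U]
    (S : LinearMap.BilinForm F U)
    (Q : QuadraticForm F U) (hQ : ∀ u, Q u = -(S u u)) (c : F) (u : U) :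
    (algebraMap F (CliffordAlgebra Q) c + ι Q u) *
      (algebraMap F (CliffordAlgebra Q) c - ι Q u) =
    algebraMap F (CliffordAlgebra Q) (c^2 + S u u) := by
  have hsq : ι Q u * ι Q u = (-(S u u)) • (1 : CliffordAlgebra Q) := by
    rw [ι_sq_scalar, hQ, Algebra.algebraMap_eq_smul_one]
  simp only [Algebra.algebraMap_eq_smul_one, mul_sub, sub_mul, add_mul, mul_add,
    smul_mul_assoc, mul_smul_comm, one_mul, mul_one, hsq]
  module

lemma pconj_mul' {F : Type*} [Field F] {U : Type*} [AddCommGroup U] [Module F U]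
    (S : LinearMap.BilinForm F U)
    (Q : QuadraticForm F U) (hQ : ∀ u, Q u = -(S u u)) (c : F) (u : U) :
    (algebraMap F (CliffordAlgebra Q) c - ι Q u) *
      (algebraMap F (CliffordAlgebra Q) c + ι Q u) =
    algebraMap F (CliffordAlgebra Q) (c^2 + S u u) := by
  have hsq : ι Q u * ι Q u = (-(S u u)) • (1 : CliffordAlgebra Q) := by
    rw [ι_sq_scalar, hQ, Algebra.algebraMap_eq_smul_one]
  simp only [Algebra.algebraMap_eq_smul_one, mul_sub, sub_mul, add_mul, mul_add,
    smul_mul_assoc, mul_smul_comm, one_mul, mul_one, hsq]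
  module

theorem stmt_19 {F : Type*} [Field F] (hchar : (2 : F) ≠ 0)
    {U : Type*} [AddCommGroup U] [Module F U] [FiniteDimensional F U]
    (S : LinearMap.BilinForm F U) (hS : ∀ x y, S x y = S y x)
    (hnd : ∀ x : U, (∀ y : U, S x y = 0) → x = 0)
    (Q : QuadraticForm F U) (hQ : ∀ u, Q u = -(S u u))
    (c₁ c₂ c₃ : F) (u₁ u₂ u₃ : U)
    (h₁ : c₁ ^ 2 + S u₁ u₁ ≠ 0) (h₂ : c₂ ^ 2 + S u₂ u₂ ≠ 0) :
    ((algebraMap F (CliffordAlgebra Q) c₁ + ι Q u₁) *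
        involute (reverse (algebraMap F (CliffordAlgebra Q) c₂ + ι Q u₂))) *
      (algebraMap F (CliffordAlgebra Q) c₃ + ι Q u₃) *
      Ring.inverse (involute ((algebraMap F (CliffordAlgebra Q) c₁ + ι Q u₁) *
        involute (reverse (algebraMap F (CliffordAlgebra Q) c₂ + ι Q u₂)))) =
    algebraMap F (CliffordAlgebra Q)
        (reflPara S (c₁, u₁) (reflPara S (c₂, u₂) (c₃, u₃))).1 +
      ι Q (reflPara S (c₁, u₁) (reflPara S (c₂, u₂) (c₃, u₃))).2 := by
  have hq12 : (c₁ ^ 2 + S u₁ u₁) * (c₂ ^ 2 + S u₂ u₂) ≠ 0 := mul_ne_zero h₁ h₂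
  have hrev : involute (reverse (algebraMap F (CliffordAlgebra Q) c₂ + ι Q u₂)) =
      algebraMap F (CliffordAlgebra Q) c₂ - ι Q u₂ := by
    simp [sub_eq_add_neg]
  rw [hrev]
  have hinvg : involute ((algebraMap F (CliffordAlgebra Q) c₁ + ι Q u₁) *
      (algebraMap F (CliffordAlgebra Q) c₂ - ι Q u₂)) =
      (algebraMap F (CliffordAlgebra Q) c₁ - ι Q u₁) *
      (algebraMap F (CliffordAlgebra Q) c₂ + ι Q u₂) := by
    simp [sub_eq_add_neg]
  rw [hinvg]
  have key : ((algebraMap F (CliffordAlgebra Q) c₁ - ι Q u₁) *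
      (algebraMap F (CliffordAlgebra Q) c₂ + ι Q u₂)) *
      ((algebraMap F (CliffordAlgebra Q) c₂ - ι Q u₂) *
      (algebraMap F (CliffordAlgebra Q) c₁ + ι Q u₁)) =
      algebraMap F (CliffordAlgebra Q) ((c₁ ^ 2 + S u₁ u₁) * (c₂ ^ 2 + S u₂ u₂)) := by
    have h0 : ∀ a b c d : CliffordAlgebra Q, (a*b)*(c*d) = a*(b*c)*d := by
      intros; simp only [mul_assoc]
    rw [h0, pconj_mul S Q hQ, ← Algebra.commutes, mul_assoc,
      pconj_mul' S Q hQ, ← map_mul, mul_comm (c₂ ^ 2 + S u₂ u₂)]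
  have key' : ((algebraMap F (CliffordAlgebra Q) c₂ - ι Q u₂) *
      (algebraMap F (CliffordAlgebra Q) c₁ + ι Q u₁)) *
      ((algebraMap F (CliffordAlgebra Q) c₁ - ι Q u₁) *
      (algebraMap F (CliffordAlgebra Q) c₂ + ι Q u₂)) =
      algebraMap F (CliffordAlgebra Q) ((c₁ ^ 2 + S u₁ u₁) * (c₂ ^ 2 + S u₂ u₂)) := by
    have h0 : ∀ a b c d : CliffordAlgebra Q, (a*b)*(c*d) = a*(b*c)*d := by
      intros; simp only [mul_assoc]
    rw [h0, pconj_mul S Q hQ, ← Algebra.commutes, mul_assoc,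
      pconj_mul' S Q hQ, ← map_mul]
  have hu : ((algebraMap F (CliffordAlgebra Q) c₁ - ι Q u₁) *
      (algebraMap F (CliffordAlgebra Q) c₂ + ι Q u₂)) *
      (((c₁ ^ 2 + S u₁ u₁) * (c₂ ^ 2 + S u₂ u₂))⁻¹ •
        ((algebraMap F (CliffordAlgebra Q) c₂ - ι Q u₂) *
        (algebraMap F (CliffordAlgebra Q) c₁ + ι Q u₁))) = 1 := by
    rw [mul_smul_comm, key, Algebra.smul_def, ← map_mul, inv_mul_cancel₀ hq12, map_one]
  have hu' : (((c₁ ^ 2 + S u₁ u₁) * (c₂ ^ 2 + S u₂ u₂))⁻¹ •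
        ((algebraMap F (CliffordAlgebra Q) c₂ - ι Q u₂) *
        (algebraMap F (CliffordAlgebra Q) c₁ + ι Q u₁))) *
      ((algebraMap F (CliffordAlgebra Q) c₁ - ι Q u₁) *
      (algebraMap F (CliffordAlgebra Q) c₂ + ι Q u₂)) = 1 := by
    rw [smul_mul_assoc, key', Algebra.smul_def, ← map_mul, inv_mul_cancel₀ hq12, map_one]
  have hRinv : Ring.inverse ((algebraMap F (CliffordAlgebra Q) c₁ - ι Q u₁) *
      (algebraMap F (CliffordAlgebra Q) c₂ + ι Q u₂)) =
      ((c₁ ^ 2 + S u₁ u₁) * (c₂ ^ 2 + S u₂ u₂))⁻¹ •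
        ((algebraMap F (CliffordAlgebra Q) c₂ - ι Q u₂) *
        (algebraMap F (CliffordAlgebra Q) c₁ + ι Q u₁)) :=
    Ring.inverse_unit ⟨_, _, hu, hu'⟩
  rw [hRinv, mul_smul_comm]
  have hassoc : ((algebraMap F (CliffordAlgebra Q) c₁ + ι Q u₁) *
      (algebraMap F (CliffordAlgebra Q) c₂ - ι Q u₂)) *
      (algebraMap F (CliffordAlgebra Q) c₃ + ι Q u₃) *
      ((algebraMap F (CliffordAlgebra Q) c₂ - ι Q u₂) *
      (algebraMap F (CliffordAlgebra Q) c₁ + ι Q u₁)) =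
      (algebraMap F (CliffordAlgebra Q) c₁ + ι Q u₁) *
      ((algebraMap F (CliffordAlgebra Q) c₂ + ι Q (-u₂)) *
        (algebraMap F (CliffordAlgebra Q) c₃ + ι Q u₃) *
        (algebraMap F (CliffordAlgebra Q) c₂ + ι Q (-u₂))) *
      (algebraMap F (CliffordAlgebra Q) c₁ + ι Q u₁) := by
    simp only [map_neg, ← sub_eq_add_neg, mul_assoc]
  rw [hassoc, sandwich' S hS Q hQ c₂ c₃ (-u₂) u₃, sandwich' S hS Q hQ c₁ _ u₁ _]
  simp only [reflPara]
  simp only [map_neg, map_sub, map_smul, map_add, LinearMap.neg_apply,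
    LinearMap.sub_apply, LinearMap.smul_apply, smul_eq_mul, neg_neg, smul_neg,
    Prod.smul_mk, Prod.mk_sub_mk, Prod.fst_sub, Prod.snd_sub, Prod.smul_fst,
    Prod.smul_snd]
  rw [hS u₃ u₂, hS u₃ u₁, hS u₂ u₁]
  simp only [Algebra.algebraMap_eq_smul_one, smul_add, smul_smul, smul_neg, map_add,
    map_smul, map_sub, map_neg, smul_sub]
  match_scalars <;> (field_simp; try ring)
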